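/- arXiv:2505.03260 — 6 statements merged into one kernel-verified Lean document; each statement's English description precedes it below -/
import Mathlib

section
/- Let r be a positive even integer and D a finite nonempty index set. For each p ∈ D let ℓ(p) be a positive integer with ℓ(p) ≤ r, let m_{p,1}, …, m_{p,ℓ(p)} be positive integers with ∑_{i=1}^{ℓ(p)} m_{p,i} = r and m_{p,i} = m_{p,ℓ(p)+1−i} for all i, and let 0 ≤ α_{p,1} < α_{p,2} < ⋯ < α_{p,ℓ(p)} < 1 be real numbers with α_{p,i} = 1 − α_{p,ℓ(p)+1−i} for all i. Fix a positive integer r' < r, and for each p ∈ D a subset I'(p) ⊆ {1, …, ℓ(p)} together with positive integers m'_{p,j} ≤ m_{p,j} for j ∈ I'(p), satisfying ∑_{j ∈ I'(p)} m'_{p,j} = r' for every p. Then |(1/r)·∑_{p∈D} ∑_{i=1}^{ℓ(p)} m_{p,i} α_{p,i} − (1/r')·∑_{p∈D} ∑_{j∈I'(p)} m'_{p,j} α_{p,j}| ≤ ∑_{p∈D} (1/2 − α_{p,1}). -/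
/-- Lemma 3.6(ii) (non-strict form): the weight-estimate inequality
`|(1/r)·∑∑ m α − (1/r')·∑∑ m' α| ≤ ∑ (1/2 − α_{p,1})`. -/
theorem stmt_1 (r : ℕ) (hr : 0 < r) (hre : Even r)
    (D : Type) [Fintype D] [Nonempty D]
    (ℓ : D → ℕ) (m : D → ℕ → ℕ) (α : D → ℕ → ℝ)
    (hℓ_pos : ∀ p, 0 < ℓ p) (hℓ_le : ∀ p, ℓ p ≤ r)
    (hm_pos : ∀ p, ∀ i ∈ Finset.Icc 1 (ℓ p), 0 < m p i)
    (hm_sum : ∀ p, ∑ i ∈ Finset.Icc 1 (ℓ p), m p i = r)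
    (hm_sym : ∀ p, ∀ i ∈ Finset.Icc 1 (ℓ p), m p i = m p (ℓ p + 1 - i))
    (hα0 : ∀ p, 0 ≤ α p 1)
    (hα1 : ∀ p, α p (ℓ p) < 1)
    (hα_mono : ∀ p, ∀ i ∈ Finset.Icc 1 (ℓ p), ∀ j ∈ Finset.Icc 1 (ℓ p),
      i < j → α p i < α p j)
    (hα_sym : ∀ p, ∀ i ∈ Finset.Icc 1 (ℓ p), α p i = 1 - α p (ℓ p + 1 - i))
    (r' : ℕ) (hr' : 0 < r') (hr'r : r' < r)
    (I' : D → Finset ℕ) (hI' : ∀ p, I' p ⊆ Finset.Icc 1 (ℓ p))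
    (m' : D → ℕ → ℕ)
    (hm'_pos : ∀ p, ∀ j ∈ I' p, 0 < m' p j)
    (hm'_le : ∀ p, ∀ j ∈ I' p, m' p j ≤ m p j)
    (hm'_sum : ∀ p, ∑ j ∈ I' p, m' p j = r') :
    |(1 / (r : ℝ)) * ∑ p : D, ∑ i ∈ Finset.Icc 1 (ℓ p), (m p i : ℝ) * α p i -
        (1 / (r' : ℝ)) * ∑ p : D, ∑ j ∈ I' p, (m' p j : ℝ) * α p j| ≤
      ∑ p : D, (1 / 2 - α p 1) := by
  have hrR : (0:ℝ) < r := by exact_mod_cast hr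
  have hr'R : (0:ℝ) < r' := by exact_mod_cast hr'
  -- inner sum equals r/2 by symmetry
  have key : ∀ p, ∑ i ∈ Finset.Icc 1 (ℓ p), (m p i : ℝ) * α p i = r / 2 := by
    intro p
    have h1 : ∑ i ∈ Finset.Icc 1 (ℓ p), (m p i : ℝ) * α p i
        = ∑ i ∈ Finset.Icc 1 (ℓ p), (m p (ℓ p + 1 - i) : ℝ) * α p (ℓ p + 1 - i) := by
      apply Finset.sum_nbij' (fun i => ℓ p + 1 - i) (fun i => ℓ p + 1 - i) <;>
        intro i hi <;> simp only [Finset.mem_Icc] at * <;>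
        first
          | omega
          | (have h : ℓ p + 1 - (ℓ p + 1 - i) = i := by omega
             rw [h])
    have h2 : ∑ i ∈ Finset.Icc 1 (ℓ p), (m p (ℓ p + 1 - i) : ℝ) * α p (ℓ p + 1 - i)
        = ∑ i ∈ Finset.Icc 1 (ℓ p), (m p i : ℝ) * (1 - α p i) := by
      apply Finset.sum_congr rfl
      intro i hi
      have hs := hα_sym p i hi
      rw [← hm_sym p i hi]
      have : α p (ℓ p + 1 - i) = 1 - α p i := by linarith
      rw [this]
    have h3 : ∑ i ∈ Finset.Icc 1 (ℓ p), (m p i : ℝ) * (1 - α p i)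
        = r - ∑ i ∈ Finset.Icc 1 (ℓ p), (m p i : ℝ) * α p i := by
      have hsum : ∑ i ∈ Finset.Icc 1 (ℓ p), (m p i : ℝ) = r := by
        exact_mod_cast hm_sum p
      simp only [mul_sub, mul_one, Finset.sum_sub_distrib, hsum]
    linarith [h1.trans (h2.trans h3)]
  -- α bounds on Icc
  have hmem1 : ∀ p, 1 ∈ Finset.Icc 1 (ℓ p) := by
    intro p; simp [Finset.mem_Icc]; exact hℓ_pos p
  have hmemℓ : ∀ p, ℓ p ∈ Finset.Icc 1 (ℓ p) := by
    intro p; simp [Finset.mem_Icc]; exact hℓ_pos p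
  have htop : ∀ p, α p (ℓ p) = 1 - α p 1 := by
    intro p
    have := hα_sym p (ℓ p) (hmemℓ p)
    have h : ℓ p + 1 - ℓ p = 1 := by omega
    rw [h] at this; linarith
  have hlow : ∀ p, ∀ j ∈ Finset.Icc 1 (ℓ p), α p 1 ≤ α p j := by
    intro p j hj
    rcases eq_or_lt_of_le (Finset.mem_Icc.mp hj).1 with h | h
    · rw [← h]
    · exact le_of_lt (hα_mono p 1 (hmem1 p) j hj h)
  have hhigh : ∀ p, ∀ j ∈ Finset.Icc 1 (ℓ p), α p j ≤ 1 - α p 1 := by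
    intro p j hj
    rw [← htop p]
    rcases eq_or_lt_of_le (Finset.mem_Icc.mp hj).2 with h | h
    · rw [h]
    · exact le_of_lt (hα_mono p j hj (ℓ p) (hmemℓ p) h)
  -- bounds on S'_p
  have hS'lo : ∀ p, (r':ℝ) * α p 1 ≤ ∑ j ∈ I' p, (m' p j : ℝ) * α p j := by
    intro p
    calc (r':ℝ) * α p 1 = ∑ j ∈ I' p, (m' p j : ℝ) * α p 1 := by
          rw [← Finset.sum_mul]; congr 1; exact_mod_cast (hm'_sum p).symm
      _ ≤ _ := Finset.sum_le_sum (fun j hj =>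
          mul_le_mul_of_nonneg_left (hlow p j (hI' p hj)) (by positivity))
  have hS'hi : ∀ p, ∑ j ∈ I' p, (m' p j : ℝ) * α p j ≤ (r':ℝ) * (1 - α p 1) := by
    intro p
    calc ∑ j ∈ I' p, (m' p j : ℝ) * α p j
        ≤ ∑ j ∈ I' p, (m' p j : ℝ) * (1 - α p 1) := Finset.sum_le_sum (fun j hj =>
          mul_le_mul_of_nonneg_left (hhigh p j (hI' p hj)) (by positivity))
      _ = (r':ℝ) * (1 - α p 1) := by
          rw [← Finset.sum_mul]; congr 1; exact_mod_cast hm'_sum p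
  -- assemble
  have hA : (1 / (r : ℝ)) * ∑ p : D, ∑ i ∈ Finset.Icc 1 (ℓ p), (m p i : ℝ) * α p i
      = ∑ p : D, (1/2 : ℝ) := by
    rw [Finset.mul_sum]
    apply Finset.sum_congr rfl
    intro p _
    rw [key p]; field_simp
  have hB : (1 / (r' : ℝ)) * ∑ p : D, ∑ j ∈ I' p, (m' p j : ℝ) * α p j
      = ∑ p : D, (1 / (r':ℝ)) * ∑ j ∈ I' p, (m' p j : ℝ) * α p j := by
    rw [Finset.mul_sum]
  rw [hA, hB, ← Finset.sum_sub_distrib]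
  refine le_trans (Finset.abs_sum_le_sum_abs _ _) (Finset.sum_le_sum ?_)
  intro p _
  rw [abs_le]
  constructor
  · have h2 : (1 / (r':ℝ)) * ∑ j ∈ I' p, (m' p j : ℝ) * α p j ≤ 1 - α p 1 := by
      rw [mul_comm, ← div_eq_mul_one_div, div_le_iff₀ hr'R]
      linarith [hS'hi p]
    linarith
  · have h2 : α p 1 ≤ (1 / (r':ℝ)) * ∑ j ∈ I' p, (m' p j : ℝ) * α p j := by
      rw [mul_comm, ← div_eq_mul_one_div, le_div_iff₀ hr'R]
      linarith [hS'lo p]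
    linarith
end

section
/- With the setup of the weight-estimate lemma — r a positive even integer, D a finite nonempty index set, and for each p ∈ D: a positive integer ℓ(p) ≤ r, positive integers m_{p,1}, …, m_{p,ℓ(p)} with ∑_i m_{p,i} = r and m_{p,i} = m_{p,ℓ(p)+1−i}, reals 0 ≤ α_{p,1} < ⋯ < α_{p,ℓ(p)} < 1 with α_{p,i} = 1 − α_{p,ℓ(p)+1−i}, a positive integer r' < r, subsets I'(p) ⊆ {1,…,ℓ(p)} and positive integers m'_{p,j} ≤ m_{p,j} (j ∈ I'(p)) with ∑_{j∈I'(p)} m'_{p,j} = r' for each p — suppose additionally that there exist some p ∈ D and some j ∈ I'(p) with α_{p,j} > α_{p,1}. Then (1/r)·∑_{p∈D} ∑_{i=1}^{ℓ(p)} m_{p,i} α_{p,i} − (1/r')·∑_{p∈D} ∑_{j∈I'(p)} m'_{p,j} α_{p,j} < ∑_{p∈D} (1/2 − α_{p,1}). -/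
/-!
Pairing `i` with `ℓ + 1 - i` turns `∑ mᵢ αᵢ` into `∑ mᵢ (1 - αᵢ)`, so a system of symmetric
type has `∑ mᵢ αᵢ = r / 2` and the first term equals `|D| / 2`. The second term is a weighted
average of the weights `α_{p,j}`, each at least `α_{p,1}`, and the extra hypothesis makes one of
these comparisons strict.
-/

open Finset

section WeightedSums

variable {ι : Type*} {s : Finset ι} {w f : ι → ℝ}

theorem sum_mul_eq_half_of_involutive_of_symm (σ : ι → ι) (hσs : ∀ i ∈ s, σ i ∈ s)
    (hσσ : ∀ i ∈ s, σ (σ i) = i) (hw : ∀ i ∈ s, w i = w (σ i))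
    (hf : ∀ i ∈ s, f i = 1 - f (σ i)) :
    ∑ i ∈ s, w i * f i = (∑ i ∈ s, w i) / 2 := by
  have hreflect : ∑ i ∈ s, w i * f i = ∑ i ∈ s, w i * (1 - f i) :=
    calc ∑ i ∈ s, w i * f i = ∑ i ∈ s, w (σ i) * (1 - f (σ i)) :=
          sum_congr rfl fun i hi => by rw [← hw i hi, hf i hi]
      _ = ∑ i ∈ s, w i * (1 - f i) :=
          sum_nbij' σ σ hσs hσs hσσ hσσ fun _ _ => rfl
  simp only [mul_sub, mul_one, sum_sub_distrib] at hreflect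
  linarith

theorem sum_mul_le_sum_mul_of_forall_le {a : ℝ} (hw : ∀ j ∈ s, 0 ≤ w j)
    (hf : ∀ j ∈ s, a ≤ f j) : (∑ j ∈ s, w j) * a ≤ ∑ j ∈ s, w j * f j := by
  rw [sum_mul]
  exact sum_le_sum fun j hj => mul_le_mul_of_nonneg_left (hf j hj) (hw j hj)

theorem sum_mul_lt_sum_mul_of_exists_lt {a : ℝ} (hw : ∀ j ∈ s, 0 ≤ w j)
    (hf : ∀ j ∈ s, a ≤ f j) (hlt : ∃ j ∈ s, 0 < w j ∧ a < f j) :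
    (∑ j ∈ s, w j) * a < ∑ j ∈ s, w j * f j := by
  obtain ⟨j, hj, hwj, hfj⟩ := hlt
  rw [sum_mul]
  exact sum_lt_sum (fun i hi => mul_le_mul_of_nonneg_left (hf i hi) (hw i hi))
    ⟨j, hj, mul_lt_mul_of_pos_left hfj hwj⟩

end WeightedSums

theorem sum_Icc_mul_eq_half_of_symm {n : ℕ} {w f : ℕ → ℝ}
    (hw : ∀ i ∈ Icc 1 n, w i = w (n + 1 - i)) (hf : ∀ i ∈ Icc 1 n, f i = 1 - f (n + 1 - i)) :
    ∑ i ∈ Icc 1 n, w i * f i = (∑ i ∈ Icc 1 n, w i) / 2 :=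
  sum_mul_eq_half_of_involutive_of_symm (fun i => n + 1 - i)
    (fun i hi => by simp only [mem_Icc] at hi ⊢; omega)
    (fun i hi => by simp only [mem_Icc] at hi; omega) hw hf

theorem apply_one_le_of_mem_Icc {n j : ℕ} {f : ℕ → ℝ} (hn : 0 < n)
    (hf : ∀ i ∈ Icc 1 n, ∀ j ∈ Icc 1 n, i < j → f i < f j) (hj : j ∈ Icc 1 n) : f 1 ≤ f j := by
  rcases (mem_Icc.mp hj).1.eq_or_lt with rfl | h1j
  · exact le_rfl
  · exact (hf 1 (mem_Icc.mpr ⟨le_rfl, hn⟩) j hj h1j).le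

theorem stmt_2_general (r : ℕ) (hr : 0 < r)
    (D : Type) [Fintype D]
    (ℓ : D → ℕ) (m : D → ℕ → ℕ) (α : D → ℕ → ℝ)
    (hℓ_pos : ∀ p, 0 < ℓ p)
    (hm_sum : ∀ p, ∑ i ∈ Finset.Icc 1 (ℓ p), m p i = r)
    (hm_sym : ∀ p, ∀ i ∈ Finset.Icc 1 (ℓ p), m p i = m p (ℓ p + 1 - i))
    (hα_mono : ∀ p, ∀ i ∈ Finset.Icc 1 (ℓ p), ∀ j ∈ Finset.Icc 1 (ℓ p),
      i < j → α p i < α p j)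
    (hα_sym : ∀ p, ∀ i ∈ Finset.Icc 1 (ℓ p), α p i = 1 - α p (ℓ p + 1 - i))
    (r' : ℕ) (hr' : 0 < r')
    (I' : D → Finset ℕ) (hI' : ∀ p, I' p ⊆ Finset.Icc 1 (ℓ p))
    (m' : D → ℕ → ℕ)
    (hm'_pos : ∀ p, ∀ j ∈ I' p, 0 < m' p j)
    (hm'_sum : ∀ p, ∑ j ∈ I' p, m' p j = r')
    (hex : ∃ p, ∃ j ∈ I' p, α p 1 < α p j) :
    (1 / (r : ℝ)) * ∑ p : D, ∑ i ∈ Finset.Icc 1 (ℓ p), (m p i : ℝ) * α p i -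
        (1 / (r' : ℝ)) * ∑ p : D, ∑ j ∈ I' p, (m' p j : ℝ) * α p j <
      ∑ p : D, (1 / 2 - α p 1) := by
  have hfirst : (1 / (r : ℝ)) * ∑ p : D, ∑ i ∈ Icc 1 (ℓ p), (m p i : ℝ) * α p i
      = ∑ _p : D, (1 / 2 : ℝ) := by
    rw [mul_sum]
    refine sum_congr rfl fun p _ => ?_
    rw [sum_Icc_mul_eq_half_of_symm (by exact_mod_cast hm_sym p) (hα_sym p)]
    rw_mod_cast [hm_sum p]
    field_simp
  have hα_ge : ∀ p, ∀ j ∈ I' p, α p 1 ≤ α p j := fun p _ hj =>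
    apply_one_le_of_mem_Icc (hℓ_pos p) (hα_mono p) (hI' p hj)
  have hm'_nonneg : ∀ p, ∀ j ∈ I' p, (0 : ℝ) ≤ m' p j := fun _ _ _ => Nat.cast_nonneg _
  have hm'_sumR : ∀ p, ∑ j ∈ I' p, (m' p j : ℝ) = r' := fun p => by exact_mod_cast hm'_sum p
  obtain ⟨p₀, j₀, hj₀, hαj₀⟩ := hex
  have hsecond : (∑ p : D, α p 1) * r' < ∑ p : D, ∑ j ∈ I' p, (m' p j : ℝ) * α p j := by
    rw [sum_mul]
    refine sum_lt_sum (fun p _ => ?_) ⟨p₀, mem_univ p₀, ?_⟩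
    · rw [mul_comm, ← hm'_sumR p]
      exact sum_mul_le_sum_mul_of_forall_le (hm'_nonneg p) (hα_ge p)
    · rw [mul_comm, ← hm'_sumR p₀]
      exact sum_mul_lt_sum_mul_of_exists_lt (hm'_nonneg p₀) (hα_ge p₀)
        ⟨j₀, hj₀, by exact_mod_cast hm'_pos p₀ j₀ hj₀, hαj₀⟩
  have hr'R : (0 : ℝ) < r' := by exact_mod_cast hr'
  rw [sum_sub_distrib, hfirst, one_div_mul_eq_div]
  linarith [(lt_div_iff₀ hr'R).mpr hsecond]

/-- The strict upper estimate (3.6) in the proof of Lemma 3.6(ii): if moreover some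
`j ∈ I'(p)` has `α_{p,j} > α_{p,1}`, then
`(1/r)·∑∑ m α − (1/r')·∑∑ m' α < ∑ (1/2 − α_{p,1})`. -/
theorem stmt_2 (r : ℕ) (hr : 0 < r) (hre : Even r)
    (D : Type) [Fintype D] [Nonempty D]
    (ℓ : D → ℕ) (m : D → ℕ → ℕ) (α : D → ℕ → ℝ)
    (hℓ_pos : ∀ p, 0 < ℓ p) (hℓ_le : ∀ p, ℓ p ≤ r)
    (hm_pos : ∀ p, ∀ i ∈ Finset.Icc 1 (ℓ p), 0 < m p i)
    (hm_sum : ∀ p, ∑ i ∈ Finset.Icc 1 (ℓ p), m p i = r)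
    (hm_sym : ∀ p, ∀ i ∈ Finset.Icc 1 (ℓ p), m p i = m p (ℓ p + 1 - i))
    (hα0 : ∀ p, 0 ≤ α p 1)
    (hα1 : ∀ p, α p (ℓ p) < 1)
    (hα_mono : ∀ p, ∀ i ∈ Finset.Icc 1 (ℓ p), ∀ j ∈ Finset.Icc 1 (ℓ p),
      i < j → α p i < α p j)
    (hα_sym : ∀ p, ∀ i ∈ Finset.Icc 1 (ℓ p), α p i = 1 - α p (ℓ p + 1 - i))
    (r' : ℕ) (hr' : 0 < r') (hr'r : r' < r)
    (I' : D → Finset ℕ) (hI' : ∀ p, I' p ⊆ Finset.Icc 1 (ℓ p))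
    (m' : D → ℕ → ℕ)
    (hm'_pos : ∀ p, ∀ j ∈ I' p, 0 < m' p j)
    (hm'_le : ∀ p, ∀ j ∈ I' p, m' p j ≤ m p j)
    (hm'_sum : ∀ p, ∑ j ∈ I' p, m' p j = r')
    (hex : ∃ p, ∃ j ∈ I' p, α p 1 < α p j) :
    (1 / (r : ℝ)) * ∑ p : D, ∑ i ∈ Finset.Icc 1 (ℓ p), (m p i : ℝ) * α p i -
        (1 / (r' : ℝ)) * ∑ p : D, ∑ j ∈ I' p, (m' p j : ℝ) * α p j <
      ∑ p : D, (1 / 2 - α p 1) :=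
  stmt_2_general r hr D ℓ m α hℓ_pos hm_sum hm_sym hα_mono hα_sym r' hr' I' hI' m' hm'_pos hm'_sum
    hex
end

section
/- With the setup of the weight-estimate lemma — r a positive even integer, D a finite nonempty index set, and for each p ∈ D: a positive integer ℓ(p) ≤ r, positive integers m_{p,1}, …, m_{p,ℓ(p)} with ∑_i m_{p,i} = r and m_{p,i} = m_{p,ℓ(p)+1−i}, reals 0 ≤ α_{p,1} < ⋯ < α_{p,ℓ(p)} < 1 with α_{p,i} = 1 − α_{p,ℓ(p)+1−i}, a positive integer r' < r, subsets I'(p) ⊆ {1,…,ℓ(p)} and positive integers m'_{p,j} ≤ m_{p,j} (j ∈ I'(p)) with ∑_{j∈I'(p)} m'_{p,j} = r' for each p — suppose additionally that there exist some p ∈ D and some j ∈ I'(p) with α_{p,j} < α_{p,ℓ(p)}. Then (1/r)·∑_{p∈D} ∑_{i=1}^{ℓ(p)} m_{p,i} α_{p,i} − (1/r')·∑_{p∈D} ∑_{j∈I'(p)} m'_{p,j} α_{p,j} > ∑_{p∈D} (α_{p,1} − 1/2). -/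
/-- The strict lower estimate (3.7) in the proof of Lemma 3.6(ii): if moreover some
`j ∈ I'(p)` has `α_{p,j} < α_{p,ℓ(p)}`, then
`(1/r)·∑∑ m α − (1/r')·∑∑ m' α > ∑ (α_{p,1} − 1/2)`. -/
theorem stmt_3 (r : ℕ) (hr : 0 < r) (hre : Even r)
    (D : Type) [Fintype D] [Nonempty D]
    (ℓ : D → ℕ) (m : D → ℕ → ℕ) (α : D → ℕ → ℝ)
    (hℓ_pos : ∀ p, 0 < ℓ p) (hℓ_le : ∀ p, ℓ p ≤ r)
    (hm_pos : ∀ p, ∀ i ∈ Finset.Icc 1 (ℓ p), 0 < m p i)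
    (hm_sum : ∀ p, ∑ i ∈ Finset.Icc 1 (ℓ p), m p i = r)
    (hm_sym : ∀ p, ∀ i ∈ Finset.Icc 1 (ℓ p), m p i = m p (ℓ p + 1 - i))
    (hα0 : ∀ p, 0 ≤ α p 1)
    (hα1 : ∀ p, α p (ℓ p) < 1)
    (hα_mono : ∀ p, ∀ i ∈ Finset.Icc 1 (ℓ p), ∀ j ∈ Finset.Icc 1 (ℓ p),
      i < j → α p i < α p j)
    (hα_sym : ∀ p, ∀ i ∈ Finset.Icc 1 (ℓ p), α p i = 1 - α p (ℓ p + 1 - i))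
    (r' : ℕ) (hr' : 0 < r') (hr'r : r' < r)
    (I' : D → Finset ℕ) (hI' : ∀ p, I' p ⊆ Finset.Icc 1 (ℓ p))
    (m' : D → ℕ → ℕ)
    (hm'_pos : ∀ p, ∀ j ∈ I' p, 0 < m' p j)
    (hm'_le : ∀ p, ∀ j ∈ I' p, m' p j ≤ m p j)
    (hm'_sum : ∀ p, ∑ j ∈ I' p, m' p j = r')
    (hex : ∃ p, ∃ j ∈ I' p, α p j < α p (ℓ p)) :
    ∑ p : D, (α p 1 - 1 / 2) <
      (1 / (r : ℝ)) * ∑ p : D, ∑ i ∈ Finset.Icc 1 (ℓ p), (m p i : ℝ) * α p i -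
        (1 / (r' : ℝ)) * ∑ p : D, ∑ j ∈ I' p, (m' p j : ℝ) * α p j := by

  classical
  have hrR : (0:ℝ) < (r:ℝ) := by exact_mod_cast hr
  have hr'R : (0:ℝ) < (r':ℝ) := by exact_mod_cast hr'
  -- each inner m-sum equals r/2
  have half : ∀ p, ∑ i ∈ Finset.Icc 1 (ℓ p), (m p i : ℝ) * α p i = (r : ℝ) / 2 := by
    intro p
    have hσ : ∀ i ∈ Finset.Icc 1 (ℓ p), ℓ p + 1 - i ∈ Finset.Icc 1 (ℓ p) := by
      intro i hi; simp only [Finset.mem_Icc] at *; omega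
    have hinv : ∀ i ∈ Finset.Icc 1 (ℓ p), ℓ p + 1 - (ℓ p + 1 - i) = i := by
      intro i hi; simp only [Finset.mem_Icc] at hi; omega
    have h1 : ∑ i ∈ Finset.Icc 1 (ℓ p), (m p i : ℝ) * α p i
        = ∑ i ∈ Finset.Icc 1 (ℓ p), (m p i : ℝ) * (1 - α p i) := by
      refine Finset.sum_nbij' (fun i => ℓ p + 1 - i) (fun i => ℓ p + 1 - i) hσ hσ hinv hinv ?_
      intro i hi
      rw [← hm_sym p i hi, ← hα_sym p i hi]
    have hsum : ∑ i ∈ Finset.Icc 1 (ℓ p), (m p i : ℝ) = (r : ℝ) := by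
      rw [← Nat.cast_sum, hm_sum p]
    have h3 : ∑ i ∈ Finset.Icc 1 (ℓ p), (m p i : ℝ) * (1 - α p i)
        = (r : ℝ) - ∑ i ∈ Finset.Icc 1 (ℓ p), (m p i : ℝ) * α p i := by
      rw [← hsum, ← Finset.sum_sub_distrib]
      exact Finset.sum_congr rfl fun i _ => by ring
    linarith [h1, h3]
  -- top weight equals 1 - bottom weight
  have htop : ∀ p, α p (ℓ p) = 1 - α p 1 := by
    intro p
    have h := hα_sym p (ℓ p) (Finset.mem_Icc.mpr ⟨hℓ_pos p, le_rfl⟩)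
    rwa [show ℓ p + 1 - ℓ p = 1 from by omega] at h
  -- α p j ≤ α p (ℓ p) for j ∈ I' p
  have hαtop : ∀ p, ∀ j ∈ I' p, α p j ≤ α p (ℓ p) := by
    intro p j hj
    have hj' := hI' p hj
    simp only [Finset.mem_Icc] at hj'
    rcases eq_or_lt_of_le hj'.2 with h | h
    · rw [h]
    · exact le_of_lt (hα_mono p j (by simp [Finset.mem_Icc]; omega)
        (ℓ p) (Finset.mem_Icc.mpr ⟨hℓ_pos p, le_rfl⟩) h)
  -- weak bound per point
  have hle : ∀ p, ∑ j ∈ I' p, (m' p j : ℝ) * α p j ≤ (r' : ℝ) * α p (ℓ p) := by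
    intro p
    have : ∑ j ∈ I' p, (m' p j : ℝ) * α p j ≤ ∑ j ∈ I' p, (m' p j : ℝ) * α p (ℓ p) := by
      refine Finset.sum_le_sum fun j hj => ?_
      exact mul_le_mul_of_nonneg_left (hαtop p j hj) (by positivity)
    calc ∑ j ∈ I' p, (m' p j : ℝ) * α p j ≤ ∑ j ∈ I' p, (m' p j : ℝ) * α p (ℓ p) := this
      _ = (∑ j ∈ I' p, (m' p j : ℝ)) * α p (ℓ p) := by rw [Finset.sum_mul]
      _ = (r' : ℝ) * α p (ℓ p) := by rw [← Nat.cast_sum, hm'_sum p]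
  -- strict bound at the witness
  obtain ⟨p₀, j₀, hj₀, hj₀lt⟩ := hex
  have hlt₀ : ∑ j ∈ I' p₀, (m' p₀ j : ℝ) * α p₀ j < (r' : ℝ) * α p₀ (ℓ p₀) := by
    have hstrict : ∑ j ∈ I' p₀, (m' p₀ j : ℝ) * α p₀ j
        < ∑ j ∈ I' p₀, (m' p₀ j : ℝ) * α p₀ (ℓ p₀) := by
      refine Finset.sum_lt_sum (fun j hj => mul_le_mul_of_nonneg_left (hαtop p₀ j hj)
        (by positivity)) ⟨j₀, hj₀, ?_⟩
      have hm0 : (0:ℝ) < (m' p₀ j₀ : ℝ) := by exact_mod_cast hm'_pos p₀ j₀ hj₀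
      exact mul_lt_mul_of_pos_left hj₀lt hm0
    calc ∑ j ∈ I' p₀, (m' p₀ j : ℝ) * α p₀ j
        < ∑ j ∈ I' p₀, (m' p₀ j : ℝ) * α p₀ (ℓ p₀) := hstrict
      _ = (∑ j ∈ I' p₀, (m' p₀ j : ℝ)) * α p₀ (ℓ p₀) := by rw [Finset.sum_mul]
      _ = (r' : ℝ) * α p₀ (ℓ p₀) := by rw [← Nat.cast_sum, hm'_sum p₀]
  -- total strict bound on the m'-sum
  have hT : ∑ p : D, ∑ j ∈ I' p, (m' p j : ℝ) * α p j
      < (r' : ℝ) * ∑ p : D, α p (ℓ p) := by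
    rw [Finset.mul_sum]
    exact Finset.sum_lt_sum (fun p _ => hle p) ⟨p₀, Finset.mem_univ p₀, hlt₀⟩
  -- evaluate the m-sum
  have hA : (1 / (r : ℝ)) * ∑ p : D, ∑ i ∈ Finset.Icc 1 (ℓ p), (m p i : ℝ) * α p i
      = (Fintype.card D : ℝ) / 2 := by
    have : ∑ p : D, ∑ i ∈ Finset.Icc 1 (ℓ p), (m p i : ℝ) * α p i
        = (Fintype.card D : ℝ) * ((r : ℝ) / 2) := by
      rw [Finset.sum_congr rfl fun p _ => half p, Finset.sum_const, Finset.card_univ,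
        nsmul_eq_mul]
    rw [this]; field_simp
  have hT' : (1 / (r' : ℝ)) * ∑ p : D, ∑ j ∈ I' p, (m' p j : ℝ) * α p j
      < ∑ p : D, α p (ℓ p) := by
    rw [div_mul_eq_mul_div, one_mul, div_lt_iff₀ hr'R]
    calc ∑ p : D, ∑ j ∈ I' p, (m' p j : ℝ) * α p j
        < (r' : ℝ) * ∑ p : D, α p (ℓ p) := hT
      _ = (∑ p : D, α p (ℓ p)) * (r' : ℝ) := by ring
  have htopsum : ∑ p : D, α p (ℓ p) = (Fintype.card D : ℝ) - ∑ p : D, α p 1 := by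
    rw [Finset.sum_congr rfl fun p _ => htop p, Finset.sum_sub_distrib, Finset.sum_const,
      Finset.card_univ, nsmul_eq_mul, mul_one]
  have hLHS : ∑ p : D, (α p 1 - 1 / 2) = (∑ p : D, α p 1) - (Fintype.card D : ℝ) / 2 := by
    rw [Finset.sum_sub_distrib, Finset.sum_const, Finset.card_univ, nsmul_eq_mul]
    ring
  rw [hA, hLHS]
  rw [htopsum] at hT'
  linarith
end

section
/- Let ℓ be a positive integer, m_1, …, m_ℓ positive integers with m_s = m_{ℓ+1−s} for all s, and set r = ∑_{s=1}^{ℓ} m_s. Let α_1 < α_2 < ⋯ < α_ℓ be real numbers. Assume: (H1) for all 1 ≤ i, j ≤ ℓ, if α_i > 1 − α_j then ∑_{s=i}^{ℓ} m_s ≤ ∑_{t=1}^{j−1} m_t; and (H2) for all 1 ≤ i, j ≤ ℓ, if 1 − α_j > α_i then r − ∑_{s=j+1}^{ℓ} m_s ≤ ∑_{t=i+1}^{ℓ} m_t (sums over empty ranges being 0). Then α_i = 1 − α_{ℓ+1−i} for every 1 ≤ i ≤ ℓ. -/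
/-- Reindexing lemma: under the symmetry `m s = m (ℓ+1-s)`, an initial sum equals the
corresponding final sum. -/
lemma sym_sum_aux (ℓ : ℕ) (m : ℕ → ℕ)
    (hm_sym : ∀ s ∈ Finset.Icc 1 ℓ, m s = m (ℓ + 1 - s))
    (k : ℕ) (hk : k ≤ ℓ) :
    ∑ t ∈ Finset.Icc 1 k, m t = ∑ s ∈ Finset.Icc (ℓ + 1 - k) ℓ, m s := by
  refine Finset.sum_nbij' (fun t => ℓ + 1 - t) (fun s => ℓ + 1 - s) ?_ ?_ ?_ ?_ ?_
  · intro t ht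
    simp only [Finset.mem_Icc] at *
    omega
  · intro s hs
    simp only [Finset.mem_Icc] at *
    omega
  · intro t ht
    simp only [Finset.mem_Icc] at ht
    omega
  · intro s hs
    simp only [Finset.mem_Icc] at hs
    omega
  · intro t ht
    simp only [Finset.mem_Icc] at ht
    exact hm_sym t (Finset.mem_Icc.mpr ⟨ht.1, ht.2.trans hk⟩)

/-- Numerical content of Proposition 3.3(i): the two dimension-count implications (H1) and (H2)
force the weights to be of symmetric type, `α_i = 1 − α_{ℓ+1−i}`. -/
theorem stmt_7 (ℓ : ℕ) (hℓ : 0 < ℓ) (m : ℕ → ℕ) (α : ℕ → ℝ)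
    (hm_pos : ∀ s ∈ Finset.Icc 1 ℓ, 0 < m s)
    (hm_sym : ∀ s ∈ Finset.Icc 1 ℓ, m s = m (ℓ + 1 - s))
    (r : ℕ) (hr : r = ∑ s ∈ Finset.Icc 1 ℓ, m s)
    (hα_mono : ∀ i ∈ Finset.Icc 1 ℓ, ∀ j ∈ Finset.Icc 1 ℓ, i < j → α i < α j)
    (H1 : ∀ i ∈ Finset.Icc 1 ℓ, ∀ j ∈ Finset.Icc 1 ℓ, 1 - α j < α i →
      ∑ s ∈ Finset.Icc i ℓ, m s ≤ ∑ t ∈ Finset.Icc 1 (j - 1), m t)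
    (H2 : ∀ i ∈ Finset.Icc 1 ℓ, ∀ j ∈ Finset.Icc 1 ℓ, α i < 1 - α j →
      r - ∑ s ∈ Finset.Icc (j + 1) ℓ, m s ≤ ∑ t ∈ Finset.Icc (i + 1) ℓ, m t) :
    ∀ i ∈ Finset.Icc 1 ℓ, α i = 1 - α (ℓ + 1 - i) := by
  intro i hi
  simp only [Finset.mem_Icc] at hi
  set j := ℓ + 1 - i with hj
  have hjmem : j ∈ Finset.Icc 1 ℓ := Finset.mem_Icc.mpr ⟨by omega, by omega⟩
  have himem : i ∈ Finset.Icc 1 ℓ := Finset.mem_Icc.mpr hi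
  -- split [i, ℓ] as {i} ∪ [i+1, ℓ]
  have hsplit : ∑ s ∈ Finset.Icc i ℓ, m s = m i + ∑ s ∈ Finset.Icc (i + 1) ℓ, m s := by
    rw [← Finset.sum_Ioc_add_eq_sum_Icc (by omega : i ≤ ℓ)]
    rw [show Finset.Ioc i ℓ = Finset.Icc (i + 1) ℓ by
      ext x; simp [Finset.mem_Ioc, Finset.mem_Icc]]
    ring
  have hmi := hm_pos i himem
  by_contra hne
  rcases lt_or_gt_of_ne (fun h => hne h.symm) with hlt | hgt
  · -- 1 - α j < α i : use H1
    have h1 := H1 i himem j hjmem hlt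
    have hsym : ∑ t ∈ Finset.Icc 1 (j - 1), m t = ∑ s ∈ Finset.Icc (i + 1) ℓ, m s := by
      have := sym_sum_aux ℓ m hm_sym (j - 1) (by omega)
      rw [this, show ℓ + 1 - (j - 1) = i + 1 by omega]
    rw [hsym, hsplit] at h1
    omega
  · -- α i < 1 - α j : use H2
    have h2 := H2 i himem j hjmem hgt
    have hrsplit : r = ∑ s ∈ Finset.Icc 1 j, m s + ∑ s ∈ Finset.Icc (j + 1) ℓ, m s := by
      have e1 : Finset.Icc 1 ℓ = Finset.Ioc 0 ℓ := by ext x; simp; omega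
      have e2 : Finset.Icc 1 j = Finset.Ioc 0 j := by ext x; simp; omega
      have e3 : Finset.Icc (j + 1) ℓ = Finset.Ioc j ℓ := by ext x; simp
      rw [hr, e1, e2, e3,
        Finset.sum_Ioc_consecutive m (by omega : (0:ℕ) ≤ j) (by omega : j ≤ ℓ)]
    have hsym : ∑ s ∈ Finset.Icc 1 j, m s = ∑ s ∈ Finset.Icc i ℓ, m s := by
      have := sym_sum_aux ℓ m hm_sym j (by omega)
      rw [this, show ℓ + 1 - j = i by omega]
    rw [hrsplit, hsym, hsplit] at h2
    omega
end

section
/- Let r be a positive even integer and D a finite nonempty index set. For each p ∈ D let ℓ(p) ≤ r be a positive integer, let m_{p,1}, …, m_{p,ℓ(p)} be positive integers with ∑_i m_{p,i} = r and m_{p,i} = m_{p,ℓ(p)+1−i}, and let 0 ≤ α_{p,1} < ⋯ < α_{p,ℓ(p)} < 1 be reals with α_{p,i} = 1 − α_{p,ℓ(p)+1−i}. Assume the weights are concentrated: ∑_{p∈D} (1/2 − α_{p,1}) < 1/r². Let r' be a positive integer with r' < r, and for each p ∈ D let I'(p) ⊆ {1,…,ℓ(p)} and m'_{p,j} ≤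 m_{p,j} (j ∈ I'(p)) be positive integers with ∑_{j∈I'(p)} m'_{p,j} = r'. Let d_E and d_F be integers. If (d_F + ∑_{p∈D} ∑_{j∈I'(p)} m'_{p,j} α_{p,j})/r' ≤ (d_E + ∑_{p∈D} ∑_{i=1}^{ℓ(p)} m_{p,i} α_{p,i})/r, then r·d_F − r'·d_E ≤ 0. -/
/-- Numerical form of Lemma 3.8(i): for concentrated symmetric-type weights, the parabolic
slope inequality for an isotropic subbundle datum implies the ordinary slope inequality
`r·d_F − r'·d_E ≤ 0`. -/
theorem stmt_9 (r : ℕ) (hr : 0 < r) (hre : Even r)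
    (D : Type) [Fintype D] [Nonempty D]
    (ℓ : D → ℕ) (m : D → ℕ → ℕ) (α : D → ℕ → ℝ)
    (hℓ_pos : ∀ p, 0 < ℓ p) (hℓ_le : ∀ p, ℓ p ≤ r)
    (hm_pos : ∀ p, ∀ i ∈ Finset.Icc 1 (ℓ p), 0 < m p i)
    (hm_sum : ∀ p, ∑ i ∈ Finset.Icc 1 (ℓ p), m p i = r)
    (hm_sym : ∀ p, ∀ i ∈ Finset.Icc 1 (ℓ p), m p i = m p (ℓ p + 1 - i))
    (hα0 : ∀ p, 0 ≤ α p 1)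
    (hα1 : ∀ p, α p (ℓ p) < 1)
    (hα_mono : ∀ p, ∀ i ∈ Finset.Icc 1 (ℓ p), ∀ j ∈ Finset.Icc 1 (ℓ p),
      i < j → α p i < α p j)
    (hα_sym : ∀ p, ∀ i ∈ Finset.Icc 1 (ℓ p), α p i = 1 - α p (ℓ p + 1 - i))
    (hconc : ∑ p : D, (1 / 2 - α p 1) < 1 / (r : ℝ) ^ 2)
    (r' : ℕ) (hr' : 0 < r') (hr'r : r' < r)
    (I' : D → Finset ℕ) (hI' : ∀ p, I' p ⊆ Finset.Icc 1 (ℓ p))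
    (m' : D → ℕ → ℕ)
    (hm'_pos : ∀ p, ∀ j ∈ I' p, 0 < m' p j)
    (hm'_le : ∀ p, ∀ j ∈ I' p, m' p j ≤ m p j)
    (hm'_sum : ∀ p, ∑ j ∈ I' p, m' p j = r')
    (dE dF : ℤ)
    (hslope : ((dF : ℝ) + ∑ p : D, ∑ j ∈ I' p, (m' p j : ℝ) * α p j) / (r' : ℝ) ≤
      ((dE : ℝ) + ∑ p : D, ∑ i ∈ Finset.Icc 1 (ℓ p), (m p i : ℝ) * α p i) / (r : ℝ)) :
    (r : ℤ) * dF - (r' : ℤ) * dE ≤ 0 := by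

  classical
  set n : ℝ := (Fintype.card D : ℝ) with hn
  have hrR : (0:ℝ) < r := by exact_mod_cast hr
  have hr'R : (0:ℝ) < r' := by exact_mod_cast hr'
  -- Step 1: full parabolic weight sum is r/2 at each p
  have hfull : ∀ p, ∑ i ∈ Finset.Icc 1 (ℓ p), (m p i : ℝ) * α p i = (r:ℝ) / 2 := by
    intro p
    have hrev : ∑ i ∈ Finset.Icc 1 (ℓ p), (m p i : ℝ) * α p i
        = ∑ i ∈ Finset.Icc 1 (ℓ p), (m p i : ℝ) * (1 - α p i) := by
      refine Finset.sum_nbij' (fun i => ℓ p + 1 - i) (fun i => ℓ p + 1 - i) ?_ ?_ ?_ ?_ ?_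
      · intro i hi; simp only [Finset.mem_Icc] at *; omega
      · intro i hi; simp only [Finset.mem_Icc] at *; omega
      · intro i hi; simp only [Finset.mem_Icc] at hi
        show ℓ p + 1 - (ℓ p + 1 - i) = i; omega
      · intro i hi; simp only [Finset.mem_Icc] at hi
        show ℓ p + 1 - (ℓ p + 1 - i) = i; omega
      · intro i hi
        have h1 := hm_sym p i hi
        have h2 := hα_sym p i hi
        have hmem : ℓ p + 1 - i ∈ Finset.Icc 1 (ℓ p) := by
          simp only [Finset.mem_Icc] at *; omega
        have h3 := hα_sym p _ hmem
        have h4 : ℓ p + 1 - (ℓ p + 1 - i) = i := by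
          simp only [Finset.mem_Icc] at hi; omega
        rw [h4] at h3
        rw [← h1, h3]; ring
    have hsum : ∑ i ∈ Finset.Icc 1 (ℓ p), (m p i : ℝ) = (r:ℝ) := by
      exact_mod_cast congrArg (Nat.cast : ℕ → ℝ) (hm_sum p)
    have : ∑ i ∈ Finset.Icc 1 (ℓ p), (m p i : ℝ) * (1 - α p i)
        = (r:ℝ) - ∑ i ∈ Finset.Icc 1 (ℓ p), (m p i : ℝ) * α p i := by
      rw [← hsum, ← Finset.sum_sub_distrib]
      apply Finset.sum_congr rfl
      intro i _; ring
    rw [this] at hrev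
    linarith
  -- Step 2: lower bound for each subbundle weight
  have hαlb : ∀ p, ∀ j ∈ I' p, α p 1 ≤ α p j := by
    intro p j hj
    have hj' := hI' p hj
    simp only [Finset.mem_Icc] at hj'
    rcases eq_or_lt_of_le hj'.1 with h | h
    · rw [← h]
    · have h1 : (1:ℕ) ∈ Finset.Icc 1 (ℓ p) := by
        simp only [Finset.mem_Icc]; exact ⟨le_refl 1, hℓ_pos p⟩
      exact le_of_lt (hα_mono p 1 h1 j (hI' p hj) h)
  -- Step 3: lower bound the subbundle weight sum
  have hTlb : ∀ p, (r':ℝ) * α p 1 ≤ ∑ j ∈ I' p, (m' p j : ℝ) * α p j := by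
    intro p
    have : ∑ j ∈ I' p, (m' p j : ℝ) * α p 1 ≤ ∑ j ∈ I' p, (m' p j : ℝ) * α p j := by
      apply Finset.sum_le_sum
      intro j hj
      exact mul_le_mul_of_nonneg_left (hαlb p j hj) (Nat.cast_nonneg _)
    calc (r':ℝ) * α p 1 = (∑ j ∈ I' p, (m' p j : ℝ)) * α p 1 := by
          congr 1
          exact_mod_cast (congrArg (Nat.cast : ℕ → ℝ) (hm'_sum p)).symm
      _ = ∑ j ∈ I' p, (m' p j : ℝ) * α p 1 := by rw [Finset.sum_mul]
      _ ≤ _ := this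
  -- aggregates
  have hE : ∑ p : D, ∑ i ∈ Finset.Icc 1 (ℓ p), (m p i : ℝ) * α p i = n * ((r:ℝ)/2) := by
    rw [Finset.sum_congr rfl (fun p _ => hfull p), Finset.sum_const, nsmul_eq_mul, Finset.card_univ, hn]
  have hT : (r':ℝ) * ∑ p : D, α p 1 ≤ ∑ p : D, ∑ j ∈ I' p, (m' p j : ℝ) * α p j := by
    rw [Finset.mul_sum]
    exact Finset.sum_le_sum fun p _ => hTlb p
  have hA : n / 2 - 1 / (r:ℝ)^2 < ∑ p : D, α p 1 := by
    have : ∑ p : D, (1/2 - α p 1) = n / 2 - ∑ p : D, α p 1 := by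
      rw [Finset.sum_sub_distrib, Finset.sum_const, nsmul_eq_mul, Finset.card_univ, hn]; ring
    rw [this] at hconc
    linarith
  -- combine with hslope
  set T := ∑ p : D, ∑ j ∈ I' p, (m' p j : ℝ) * α p j with hTdef
  rw [hE] at hslope
  have hmul : (r:ℝ) * ((dF:ℝ) + T) ≤ (r':ℝ) * ((dE:ℝ) + n * ((r:ℝ)/2)) := by
    rw [div_le_div_iff₀ hr'R hrR] at hslope
    linarith
  have hfin : ((r:ℝ) * (dF:ℝ) - (r':ℝ) * (dE:ℝ)) < 1 := by
    have h1 : (r':ℝ) * ((n:ℝ)/2 - 1/(r:ℝ)^2) < (r':ℝ) * ∑ p : D, α p 1 :=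
      (mul_lt_mul_iff_right₀ hr'R).2 hA
    have h2 : (r':ℝ) * (n/2 - 1/(r:ℝ)^2) ≤ T := le_of_lt (lt_of_lt_of_le h1 hT)
    have h3 : (r:ℝ) * ((r':ℝ) * (n/2 - 1/(r:ℝ)^2)) ≤ (r:ℝ) * T :=
      mul_le_mul_of_nonneg_left h2 (le_of_lt hrR)
    have hrr' : (r':ℝ) / (r:ℝ) < 1 := by
      rw [div_lt_one hrR]; exact_mod_cast hr'r
    have hsq : (r:ℝ) * ((r':ℝ) * (1/(r:ℝ)^2)) = (r':ℝ)/(r:ℝ) := by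
      field_simp
    nlinarith [hmul, h3]
  have : ((r:ℤ) * dF - (r':ℤ) * dE : ℤ) < 1 := by
    have := hfin
    push_cast at this ⊢
    exact_mod_cast this
  omega
end

section
/- Let r be a positive even integer and D a finite nonempty index set. For each p ∈ D let ℓ(p) ≤ r be a positive integer, let m_{p,1}, …, m_{p,ℓ(p)} be positive integers with ∑_i m_{p,i} = r and m_{p,i} = m_{p,ℓ(p)+1−i}, and let 0 ≤ α_{p,1} < ⋯ < α_{p,ℓ(p)} < 1 be reals with α_{p,i} = 1 − α_{p,ℓ(p)+1−i}. Assume the weights are concentrated: ∑_{p∈D} (1/2 − α_{p,1}) < 1/r². Let r' be a positive integer with r' < r, and for each p ∈ D let I'(p) ⊆ {1,…,ℓ(p)} and m'_{p,j} ≤ m_{p,j} (j ∈ I'(p)) be positive integers with ∑_{j∈I'(p)} m'_{p,j} = r'. Let d_E and d_F be integers. If r·d_F − r'·d_E ≤ −1, then (d_F + ∑_{p∈D} ∑_{j∈I'(p)} m'_{p,j} α_{p,j})/r' < (d_E + ∑_{p∈D} ∑_{i=1}^{ℓ(p)} m_{p,i} α_{p,i})/r. -/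
/-- Numerical form of Lemma 3.8(ii): for concentrated symmetric-type weights, the ordinary
slope inequality `r·d_F − r'·d_E ≤ −1` implies the strict parabolic slope inequality. -/
theorem stmt_10 (r : ℕ) (hr : 0 < r) (hre : Even r)
    (D : Type) [Fintype D] [Nonempty D]
    (ℓ : D → ℕ) (m : D → ℕ → ℕ) (α : D → ℕ → ℝ)
    (hℓ_pos : ∀ p, 0 < ℓ p) (hℓ_le : ∀ p, ℓ p ≤ r)
    (hm_pos : ∀ p, ∀ i ∈ Finset.Icc 1 (ℓ p), 0 < m p i)
    (hm_sum : ∀ p, ∑ i ∈ Finset.Icc 1 (ℓ p), m p i = r)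
    (hm_sym : ∀ p, ∀ i ∈ Finset.Icc 1 (ℓ p), m p i = m p (ℓ p + 1 - i))
    (hα0 : ∀ p, 0 ≤ α p 1)
    (hα1 : ∀ p, α p (ℓ p) < 1)
    (hα_mono : ∀ p, ∀ i ∈ Finset.Icc 1 (ℓ p), ∀ j ∈ Finset.Icc 1 (ℓ p),
      i < j → α p i < α p j)
    (hα_sym : ∀ p, ∀ i ∈ Finset.Icc 1 (ℓ p), α p i = 1 - α p (ℓ p + 1 - i))
    (hconc : ∑ p : D, (1 / 2 - α p 1) < 1 / (r : ℝ) ^ 2)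
    (r' : ℕ) (hr' : 0 < r') (hr'r : r' < r)
    (I' : D → Finset ℕ) (hI' : ∀ p, I' p ⊆ Finset.Icc 1 (ℓ p))
    (m' : D → ℕ → ℕ)
    (hm'_pos : ∀ p, ∀ j ∈ I' p, 0 < m' p j)
    (hm'_le : ∀ p, ∀ j ∈ I' p, m' p j ≤ m p j)
    (hm'_sum : ∀ p, ∑ j ∈ I' p, m' p j = r')
    (dE dF : ℤ)
    (hstable : (r : ℤ) * dF - (r' : ℤ) * dE ≤ -1) :
    ((dF : ℝ) + ∑ p : D, ∑ j ∈ I' p, (m' p j : ℝ) * α p j) / (r' : ℝ) <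
      ((dE : ℝ) + ∑ p : D, ∑ i ∈ Finset.Icc 1 (ℓ p), (m p i : ℝ) * α p i) / (r : ℝ) := by
  have hrR : (0:ℝ) < r := by exact_mod_cast hr
  have hr'R : (0:ℝ) < r' := by exact_mod_cast hr'
  -- Step 1: per-point symmetric sum equals r/2
  have key : ∀ p, ∑ i ∈ Finset.Icc 1 (ℓ p), (m p i : ℝ) * α p i = (r : ℝ) / 2 := by
    intro p
    set S := ∑ i ∈ Finset.Icc 1 (ℓ p), (m p i : ℝ) * α p i with hS
    have hrefl : ∑ i ∈ Finset.Icc 1 (ℓ p), (m p i : ℝ) * α p i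
        = ∑ i ∈ Finset.Icc 1 (ℓ p), (m p i : ℝ) * (1 - α p i) := by
      refine Finset.sum_nbij' (fun i => ℓ p + 1 - i) (fun i => ℓ p + 1 - i) ?_ ?_ ?_ ?_ ?_
      · intro a ha; simp only [Finset.mem_Icc] at *; omega
      · intro a ha; simp only [Finset.mem_Icc] at *; omega
      · intro a ha; simp only [Finset.mem_Icc] at ha; omega
      · intro a ha; simp only [Finset.mem_Icc] at ha; omega
      · intro a ha
        have h1 := hm_sym p a ha
        have h2 := hα_sym p a ha
        rw [← h1]
        have : α p (ℓ p + 1 - a) = 1 - α p a := by linarith [h2]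
        rw [this]; ring
    have hsum : ∑ i ∈ Finset.Icc 1 (ℓ p), (m p i : ℝ) = (r : ℝ) := by
      rw [← Nat.cast_sum, hm_sum p]
    have : S = (r : ℝ) - S := by
      calc S = ∑ i ∈ Finset.Icc 1 (ℓ p), (m p i : ℝ) * (1 - α p i) := hrefl
        _ = (∑ i ∈ Finset.Icc 1 (ℓ p), (m p i : ℝ))
            - ∑ i ∈ Finset.Icc 1 (ℓ p), (m p i : ℝ) * α p i := by
              rw [← Finset.sum_sub_distrib]; congr 1; ext i; ring
        _ = (r : ℝ) - S := by rw [hsum]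
    linarith
  -- Step 2: weights are bounded above by 1 - α p 1
  have hub : ∀ p, ∀ j ∈ Finset.Icc 1 (ℓ p), α p j ≤ 1 - α p 1 := by
    intro p j hj
    have hℓmem : ℓ p ∈ Finset.Icc 1 (ℓ p) := by
      simp [Finset.mem_Icc]; exact hℓ_pos p
    have htop : α p (ℓ p) = 1 - α p 1 := by
      have := hα_sym p (ℓ p) hℓmem
      have h1 : ℓ p + 1 - ℓ p = 1 := by omega
      rwa [h1] at this
    rcases eq_or_lt_of_le (Finset.mem_Icc.mp hj).2 with h | h
    · rw [h, htop]
    · exact le_of_lt (htop ▸ hα_mono p j hj (ℓ p) hℓmem h)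
  -- Step 3: bound the subbundle parabolic contribution at each p
  have hBp : ∀ p, ∑ j ∈ I' p, (m' p j : ℝ) * α p j
      ≤ (r' : ℝ) * (1 - α p 1) := by
    intro p
    calc ∑ j ∈ I' p, (m' p j : ℝ) * α p j
        ≤ ∑ j ∈ I' p, (m' p j : ℝ) * (1 - α p 1) := by
          refine Finset.sum_le_sum fun j hj => ?_
          exact mul_le_mul_of_nonneg_left (hub p j (hI' p hj)) (Nat.cast_nonneg _)
      _ = (∑ j ∈ I' p, (m' p j : ℝ)) * (1 - α p 1) := by rw [Finset.sum_mul]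
      _ = (r' : ℝ) * (1 - α p 1) := by rw [← Nat.cast_sum, hm'_sum p]
  -- Global sums
  set A := ∑ p : D, ∑ i ∈ Finset.Icc 1 (ℓ p), (m p i : ℝ) * α p i with hA
  set B := ∑ p : D, ∑ j ∈ I' p, (m' p j : ℝ) * α p j with hB
  set T := ∑ p : D, ((1:ℝ) / 2 - α p 1) with hT
  have hAval : A = (Fintype.card D : ℝ) * r / 2 := by
    rw [hA]
    rw [Finset.sum_congr rfl fun p _ => key p]
    simp [Finset.sum_const, mul_comm]
    ring
  have hBval : B ≤ (r' : ℝ) * (T + (Fintype.card D : ℝ) / 2) := by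
    calc B ≤ ∑ p : D, (r' : ℝ) * (1 - α p 1) := Finset.sum_le_sum fun p _ => hBp p
      _ = (r' : ℝ) * ∑ p : D, ((1:ℝ) - α p 1) := by rw [Finset.mul_sum]
      _ = (r' : ℝ) * (T + (Fintype.card D : ℝ) / 2) := by
          congr 1
          have h4 : ∑ p : D, ((1:ℝ) - α p 1) = ∑ p : D, (((1:ℝ)/2 - α p 1) + 1/2) := by
            apply Finset.sum_congr rfl; intros; ring
          rw [h4, Finset.sum_add_distrib, ← hT]
          simp [Finset.sum_const, Finset.card_univ]
          ring
  have hT1 : (r : ℝ) * r' * T < 1 := by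
    have h1 : (r : ℝ) * r' * T < (r : ℝ) * r' * (1 / (r:ℝ)^2) :=
      mul_lt_mul_of_pos_left hconc (by positivity)
    have h2 : (r : ℝ) * r' * (1 / (r:ℝ)^2) = (r' : ℝ) / r := by
      field_simp
    have h3 : (r' : ℝ) / r < 1 := by
      rw [div_lt_one hrR]; exact_mod_cast hr'r
    linarith
  have hstableR : (r : ℝ) * dF - (r' : ℝ) * dE ≤ -1 := by exact_mod_cast hstable
  rw [div_lt_div_iff₀ hr'R hrR]
  have hBr : (r : ℝ) * B ≤ (r : ℝ) * ((r' : ℝ) * (T + (Fintype.card D : ℝ) / 2)) :=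
    mul_le_mul_of_nonneg_left hBval (le_of_lt hrR)
  nlinarith [hBr, hAval, hT1, hstableR]
end
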